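/- Let n ≥ 1 and θ ∈ (0, π), and define H_n(t, θ) = (sin(nθ)·sin θ)/(2n) · [cos(n(t − π/(2n)))/(cos(t − π/(2n)) − cos θ) + cos(n(t + π/(2n)))/(cos(t + π/(2n)) − cos θ)]. Then ∫₀^π H_n(t, θ) dt = (π/n)·sin²(nθ). -/

import Mathlib

open Real MeasureTheory Set Filter

/-- The kernel `H_n(t,θ)`. -/
noncomputable def Hker (n : ℕ) (t θ : ℝ) : ℝ :=
  (Real.sin (n * θ) * Real.sin θ) / (2 * n) *
    (Real.cos (n * (t - π / (2 * n))) / (Real.cos (t - π / (2 * n)) - Real.cos θ) +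
     Real.cos (n * (t + π / (2 * n))) / (Real.cos (t + π / (2 * n)) - Real.cos θ))

/-!
Away from its poles, `cos (m u) / (cos u - cos θ)` is the trigonometric polynomial
`(cos (m u) - cos (m θ)) / (cos u - cos θ)` plus `cos (m θ) / (cos u - cos θ)`, so it has an
explicit antiderivative `G` whose only singular part is
`log |sin ((u + θ) / 2) / sin ((u - θ) / 2)|`. These logarithms are even about each of their poles,
so with `a = π / (2 n)` the antiderivative `F t ∝ G (t - a) + G (t + a)` of `H_n(·, θ)` satisfies
`F (p + ε) - F (p - ε) → 0` at every pole `p`, and the principal value is `F π - F 0`. Every pole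
folds under `arccos ∘ cos` onto one of two points of `[0, π]`, so only these two need to be
excised. Finally `G` is point-symmetric about `0` and `π`: this makes `F` continuous there, even
when a pole sits at an endpoint, and reduces `F π - F 0` to
`∫₀^π (cos (n u) - cos (n θ)) / (cos u - cos θ) du = π sin (n θ) / sin θ`.
-/

open Topology

def SymmetricallyContinuousAt (f : ℝ → ℝ) (x : ℝ) : Prop :=
  Tendsto (fun h => f (x + h) - f (x - h)) (𝓝 0) (𝓝 0)

namespace SymmetricallyContinuousAt

variable {f g : ℝ → ℝ} {x : ℝ}

theorem of_continuousAt (hf : ContinuousAt f x) : SymmetricallyContinuousAt f x := by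
  have hadd := (continuous_const_add x).tendsto' 0 x (add_zero x)
  have hsub := (continuous_sub_left x).tendsto' 0 x (sub_zero x)
  simpa [SymmetricallyContinuousAt] using (hf.tendsto.comp hadd).sub (hf.tendsto.comp hsub)

theorem of_forall_eq (hf : ∀ h, f (x + h) = f (x - h)) : SymmetricallyContinuousAt f x := by
  simp [SymmetricallyContinuousAt, hf]

theorem add (hf : SymmetricallyContinuousAt f x) (hg : SymmetricallyContinuousAt g x) :
    SymmetricallyContinuousAt (fun y => f y + g y) x := by
  simpa [SymmetricallyContinuousAt, add_sub_add_comm] using Tendsto.add hf hg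

theorem sub (hf : SymmetricallyContinuousAt f x) (hg : SymmetricallyContinuousAt g x) :
    SymmetricallyContinuousAt (fun y => f y - g y) x := by
  simpa [SymmetricallyContinuousAt, sub_sub_sub_comm] using Tendsto.sub hf hg

theorem const_mul (hf : SymmetricallyContinuousAt f x) (c : ℝ) :
    SymmetricallyContinuousAt (fun y => c * f y) x := by
  simpa [SymmetricallyContinuousAt, mul_sub] using Tendsto.const_mul c hf

theorem div_const (hf : SymmetricallyContinuousAt f x) (c : ℝ) :
    SymmetricallyContinuousAt (fun y => f y / c) x := by
  simpa [SymmetricallyContinuousAt, sub_div] using Tendsto.div_const hf c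

theorem comp_add_const {b : ℝ} (hf : SymmetricallyContinuousAt f (x + b)) :
    SymmetricallyContinuousAt (fun y => f (y + b)) x := by
  simpa only [SymmetricallyContinuousAt, add_right_comm, sub_add_eq_add_sub] using hf

theorem comp_sub_const {b : ℝ} (hf : SymmetricallyContinuousAt f (x - b)) :
    SymmetricallyContinuousAt (fun y => f (y - b)) x := by
  simpa only [sub_eq_add_neg] using hf.comp_add_const

theorem continuousAt (hf : SymmetricallyContinuousAt f x)
    (hsymm : ∀ h, f (x + h) + f (x - h) = 2 * f x) : ContinuousAt f x := by
  have hlim : Tendsto (fun h => f x + (f (x + h) - f (x - h)) / 2) (𝓝 0) (𝓝 (f x)) := by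
    simpa using tendsto_const_nhds.add (Tendsto.div_const hf 2)
  rw [ContinuousAt, ← map_add_left_nhds_zero, tendsto_map'_iff]
  refine hlim.congr fun h => ?_
  simp only [Function.comp_apply]
  linarith [hsymm h]

theorem tendsto_sub_max {p : ℝ} (hf : SymmetricallyContinuousAt f p) (hxp : x ≤ p)
    (hx : ContinuousAt f x) :
    Tendsto (fun ε => f (p + ε) - f (max x (p - ε))) (𝓝[>] 0) (𝓝 0) := by
  rcases hxp.eq_or_lt with rfl | hxp
  · have h : Tendsto (fun ε => f (x + ε) - f x) (𝓝 0) (𝓝 0) := by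
      rw [ContinuousAt, ← map_add_left_nhds_zero, tendsto_map'_iff] at hx
      simpa using hx.sub_const (f x)
    refine (h.mono_left nhdsWithin_le_nhds).congr' ?_
    filter_upwards [self_mem_nhdsWithin] with ε hε
    rw [max_eq_left (by linarith [mem_Ioi.mp hε])]
  · refine (hf.mono_left nhdsWithin_le_nhds).congr' ?_
    filter_upwards [Ioo_mem_nhdsGT (sub_pos.mpr hxp)] with ε hε
    rw [max_eq_right (by linarith [hε.2])]

theorem tendsto_min_sub {p y : ℝ} (hf : SymmetricallyContinuousAt f p) (hpy : p ≤ y)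
    (hy : ContinuousAt f y) :
    Tendsto (fun ε => f (min y (p + ε)) - f (p - ε)) (𝓝[>] 0) (𝓝 0) := by
  rcases hpy.eq_or_lt with rfl | hpy
  · have h : Tendsto (fun ε => f p - f (p - ε)) (𝓝 0) (𝓝 0) := by
      have hsub := (continuous_sub_left p).tendsto' 0 p (sub_zero p)
      simpa using (hy.tendsto.comp hsub).const_sub (f p)
    refine (h.mono_left nhdsWithin_le_nhds).congr' ?_
    filter_upwards [self_mem_nhdsWithin] with ε hε
    rw [min_eq_left (by linarith [mem_Ioi.mp hε])]
  · refine (hf.mono_left nhdsWithin_le_nhds).congr' ?_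
    filter_upwards [Ioo_mem_nhdsGT (sub_pos.mpr hpy)] with ε hε
    rw [min_eq_right (by linarith [hε.2])]

end SymmetricallyContinuousAt

section PrincipalValue

variable {F f : ℝ → ℝ}

theorem setIntegral_Icc_eq_sub_of_hasDerivAt {u v : ℝ} (huv : u ≤ v)
    (hF : ∀ t ∈ Icc u v, HasDerivAt F (f t) t ∧ ContinuousAt f t) :
    ∫ t in Icc u v, f t = F v - F u := by
  rw [integral_Icc_eq_integral_Ioc, ← intervalIntegral.integral_of_le huv]
  refine intervalIntegral.integral_eq_sub_of_hasDerivAt (fun t ht => (hF t ?_).1) ?_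
  · rwa [uIcc_of_le huv] at ht
  · refine ContinuousOn.intervalIntegrable fun t ht => (hF t ?_).2.continuousWithinAt
    rwa [uIcc_of_le huv] at ht

theorem setIntegral_Icc_eq_max_sub (u v : ℝ)
    (hF : ∀ t ∈ Icc u v, HasDerivAt F (f t) t ∧ ContinuousAt f t) :
    ∫ t in Icc u v, f t = F (max u v) - F u := by
  rcases le_or_gt u v with huv | hvu
  · rw [max_eq_right huv, setIntegral_Icc_eq_sub_of_hasDerivAt huv hF]
  · rw [max_eq_left hvu.le, Icc_eq_empty hvu.not_ge, setIntegral_empty, sub_self]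

theorem setIntegral_Icc_eq_sub_min (u v : ℝ)
    (hF : ∀ t ∈ Icc u v, HasDerivAt F (f t) t ∧ ContinuousAt f t) :
    ∫ t in Icc u v, f t = F v - F (min v u) := by
  rcases le_or_gt u v with huv | hvu
  · rw [min_eq_right huv, setIntegral_Icc_eq_sub_of_hasDerivAt huv hF]
  · rw [min_eq_left hvu.le, Icc_eq_empty hvu.not_ge, setIntegral_empty, sub_self]

theorem setOf_le_abs_sub_and_le_abs_sub {x p q y ε : ℝ} (hxp : x ≤ p) (hpq : p < q) (hqy : q ≤ y)
    (hε : 0 ≤ ε) :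
    {t ∈ Icc x y | ε ≤ |t - p| ∧ ε ≤ |t - q|}
      = Icc x (p - ε) ∪ Icc (p + ε) (q - ε) ∪ Icc (q + ε) y := by
  ext t
  simp only [mem_ofPred_eq, mem_union, mem_Icc, le_abs']
  constructor
  · rintro ⟨⟨htx, hty⟩, htp | htp, htq | htq⟩ <;>
      first
      | exact Or.inl (Or.inl ⟨htx, by linarith⟩)
      | exact Or.inl (Or.inr ⟨by linarith, by linarith⟩)
      | exact Or.inr ⟨by linarith, hty⟩
  · rintro ((⟨htx, ht⟩ | ⟨ht₁, ht₂⟩) | ⟨ht, hty⟩)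
    · exact ⟨⟨htx, by linarith⟩, Or.inl (by linarith), Or.inl (by linarith)⟩
    · exact ⟨⟨by linarith, by linarith⟩, Or.inr (by linarith), Or.inl (by linarith)⟩
    · exact ⟨⟨by linarith, hty⟩, Or.inr (by linarith), Or.inr (by linarith)⟩

theorem setIntegral_setOf_le_abs_sub_and_le_abs_sub {x p q y ε : ℝ}
    (hxp : x ≤ p) (hqy : q ≤ y) (hε : 0 < ε) (hεpq : 2 * ε ≤ q - p)
    (hF : ∀ t ∈ Icc x y, t ≠ p → t ≠ q → HasDerivAt F (f t) t ∧ ContinuousAt f t) :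
    ∫ t in {t ∈ Icc x y | ε ≤ |t - p| ∧ ε ≤ |t - q|}, f t
      = (F (max x (p - ε)) - F x) + (F (q - ε) - F (p + ε)) + (F y - F (min y (q + ε))) := by
  have hreg : ∀ u v, (∀ t ∈ Icc u v, x ≤ t ∧ t ≤ y ∧ t ≠ p ∧ t ≠ q) →
      ∀ t ∈ Icc u v, HasDerivAt F (f t) t ∧ ContinuousAt f t := fun u v h t ht =>
    have ⟨htx, hty, htp, htq⟩ := h t ht
    hF t ⟨htx, hty⟩ htp htq
  have h₁ := hreg x (p - ε) fun t ⟨h₁, h₂⟩ => ⟨h₁, by linarith, by linarith, by linarith⟩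
  have h₂ := hreg (p + ε) (q - ε) fun t ⟨h₁, h₂⟩ =>
    ⟨by linarith, by linarith, by linarith, by linarith⟩
  have h₃ := hreg (q + ε) y fun t ⟨h₁, h₂⟩ => ⟨by linarith, h₂, by linarith, by linarith⟩
  have hint : ∀ u v, (∀ t ∈ Icc u v, HasDerivAt F (f t) t ∧ ContinuousAt f t) →
      IntegrableOn f (Icc u v) := fun u v h =>
    ContinuousOn.integrableOn_Icc fun t ht => (h t ht).2.continuousWithinAt
  have hdisj₁ : Disjoint (Icc x (p - ε)) (Icc (p + ε) (q - ε)) :=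
    disjoint_left.mpr fun t ht ht' => by linarith [ht.2, ht'.1]
  have hdisj₂ : Disjoint (Icc x (p - ε) ∪ Icc (p + ε) (q - ε)) (Icc (q + ε) y) :=
    disjoint_union_left.mpr ⟨disjoint_left.mpr fun t ht ht' => by linarith [ht.2, ht'.1],
      disjoint_left.mpr fun t ht ht' => by linarith [ht.2, ht'.1]⟩
  rw [setOf_le_abs_sub_and_le_abs_sub hxp (by linarith) hqy hε.le,
    setIntegral_union hdisj₂ measurableSet_Icc ((hint _ _ h₁).union (hint _ _ h₂)) (hint _ _ h₃),
    setIntegral_union hdisj₁ measurableSet_Icc (hint _ _ h₁) (hint _ _ h₂),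
    setIntegral_Icc_eq_max_sub _ _ h₁, setIntegral_Icc_eq_sub_of_hasDerivAt (by linarith) h₂,
    setIntegral_Icc_eq_sub_min _ _ h₃]

theorem tendsto_setIntegral_of_symmetricallyContinuousAt {x p q y : ℝ}
    (hxp : x ≤ p) (hpq : p < q) (hqy : q ≤ y)
    (hF : ∀ t ∈ Icc x y, t ≠ p → t ≠ q → HasDerivAt F (f t) t ∧ ContinuousAt f t)
    (hx : ContinuousAt F x) (hy : ContinuousAt F y)
    (hp : SymmetricallyContinuousAt F p) (hq : SymmetricallyContinuousAt F q) :
    Tendsto (fun ε => ∫ t in {t ∈ Icc x y | ε ≤ |t - p| ∧ ε ≤ |t - q|}, f t)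
      (𝓝[>] 0) (𝓝 (F y - F x)) := by
  have hlim := tendsto_const_nhds (x := F y - F x) |>.sub
    ((hp.tendsto_sub_max hxp hx).add (hq.tendsto_min_sub hqy hy))
  rw [add_zero, sub_zero] at hlim
  refine hlim.congr' ?_
  filter_upwards [Ioo_mem_nhdsGT (half_pos (sub_pos.mpr hpq))] with ε ⟨hε, hεpq⟩
  rw [setIntegral_setOf_le_abs_sub_and_le_abs_sub hxp hqy hε (by linarith) hF]
  ring

end PrincipalValue

theorem cos_sub_eq_or_cos_add_eq_iff (s a θ : ℝ) :
    (cos (s - a) = cos θ ∨ cos (s + a) = cos θ) ↔ (cos s = cos (θ - a) ∨ cos s = cos (θ + a)) := by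
  have hprod : (cos (s - a) - cos θ) * (cos (s + a) - cos θ)
      = (cos s - cos (θ - a)) * (cos s - cos (θ + a)) := by
    simp only [cos_sub, cos_add]
    linear_combination (cos s ^ 2 - cos θ ^ 2) * sin_sq_add_cos_sq a
      + sin a ^ 2 * (sin_sq_add_cos_sq θ - sin_sq_add_cos_sq s)
  simp only [← sub_eq_zero (b := cos θ), ← sub_eq_zero (a := cos s), ← mul_eq_zero, hprod]

theorem arccos_cos_le_abs (y : ℝ) : arccos (cos y) ≤ |y| := by
  rw [← cos_abs]
  rcases le_or_gt |y| π with hy | hy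
  · rw [arccos_cos (abs_nonneg y) hy]
  · exact (arccos_le_pi _).trans hy.le

theorem abs_sub_arccos_cos_le {t : ℝ} (ht : t ∈ Icc 0 π) (s : ℝ) :
    |t - arccos (cos s)| ≤ |t - s| := by
  set p := arccos (cos s)
  have hp : p ∈ Icc 0 π := ⟨arccos_nonneg _, arccos_le_pi _⟩
  have hcos : cos p = cos s := cos_arccos (neg_one_le_cos s) (cos_le_one s)
  have hsin : sin s ≤ sin p := by
    have hsp : sin p ^ 2 = sin s ^ 2 := by rw [sin_sq, sin_sq, hcos]
    nlinarith [sin_nonneg_of_nonneg_of_le_pi hp.1 hp.2]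
  have hcos_sub : cos (t - s) ≤ cos (t - p) := by
    rw [cos_sub, cos_sub, hcos]
    nlinarith [sin_nonneg_of_nonneg_of_le_pi ht.1 ht.2]
  have htp : |t - p| ≤ π := abs_le.mpr ⟨by linarith [ht.1, hp.2], by linarith [ht.2, hp.1]⟩
  calc |t - p| = arccos (cos (t - p)) := by rw [← cos_abs, arccos_cos (abs_nonneg _) htp]
    _ ≤ arccos (cos (t - s)) := arccos_le_arccos hcos_sub
    _ ≤ |t - s| := arccos_cos_le_abs _

theorem setOf_forall_cos_eq_le_abs_sub (b c ε : ℝ) :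
    {t ∈ Icc 0 π | ∀ s, (cos s = cos b ∨ cos s = cos c) → ε ≤ |t - s|}
      = {t ∈ Icc 0 π | ε ≤ |t - arccos (cos b)| ∧ ε ≤ |t - arccos (cos c)|} := by
  have hcos : ∀ b, cos (arccos (cos b)) = cos b := fun b =>
    cos_arccos (neg_one_le_cos b) (cos_le_one b)
  ext t
  refine ⟨fun ⟨ht, h⟩ => ⟨ht, h _ (Or.inl (hcos b)), h _ (Or.inr (hcos c))⟩,
    fun ⟨ht, hεb, hεc⟩ => ⟨ht, ?_⟩⟩
  rintro s (hs | hs)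
  · exact hεb.trans (hs ▸ abs_sub_arccos_cos_le ht s)
  · exact hεc.trans (hs ▸ abs_sub_arccos_cos_le ht s)

theorem cos_sub_ne_and_cos_add_ne {t a θ : ℝ} (ht : t ∈ Icc 0 π)
    (htp : t ≠ arccos (cos (θ - a))) (htq : t ≠ arccos (cos (θ + a))) :
    cos (t - a) ≠ cos θ ∧ cos (t + a) ≠ cos θ := by
  rw [← not_or, cos_sub_eq_or_cos_add_eq_iff]
  rintro (h | h)
  · exact htp (by rw [← h, arccos_cos ht.1 ht.2])
  · exact htq (by rw [← h, arccos_cos ht.1 ht.2])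

theorem arccos_cos_sub_lt_arccos_cos_add {θ a : ℝ} (hθ : 0 < sin θ) (ha : 0 < sin a) :
    arccos (cos (θ - a)) < arccos (cos (θ + a)) := by
  refine arccos_lt_arccos (neg_one_le_cos _) ?_ (cos_le_one _)
  linarith [cos_add θ a, cos_sub θ a, mul_pos hθ ha]

theorem cos_add_two_mul_add_cos_mul (m x : ℝ) :
    cos ((m + 2) * x) + cos (m * x) = 2 * cos x * cos ((m + 1) * x) := by
  rw [show (m + 2) * x = (m + 1) * x + x by ring, show m * x = (m + 1) * x - x by ring,
    cos_add, cos_sub]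
  ring

theorem sin_add_two_mul_add_sin_mul (m x : ℝ) :
    sin ((m + 2) * x) + sin (m * x) = 2 * cos x * sin ((m + 1) * x) := by
  rw [show (m + 2) * x = (m + 1) * x + x by ring, show m * x = (m + 1) * x - x by ring,
    sin_add, sin_sub]
  ring

theorem integral_cos_nat_mul_eq_zero {k : ℕ} (hk : k ≠ 0) : ∫ u in (0)..π, cos (k * u) = 0 := by
  rw [intervalIntegral.integral_comp_mul_left _ (Nat.cast_ne_zero.mpr hk), integral_cos,
    sin_nat_mul_pi]
  simp

/-- The trigonometric polynomial `(cos (m u) - cos (m θ)) / (cos u - cos θ)`, defined through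
`cos ((m + 2) x) = 2 cos x cos ((m + 1) x) - cos (m x)` so that it has no singularities. -/
noncomputable def cosDivDiff (θ : ℝ) : ℕ → ℝ → ℝ
  | 0, _ => 0
  | 1, _ => 1
  | m + 2, u => 2 * cos ((m + 1) * u) + 2 * cos θ * cosDivDiff θ (m + 1) u - cosDivDiff θ m u

namespace cosDivDiff

variable (θ : ℝ)

theorem continuous (m : ℕ) : Continuous (cosDivDiff θ m) := by
  induction m using Nat.twoStepInduction with
  | zero => exact continuous_const
  | one => exact continuous_const
  | more m h₀ h₁ =>
    change Continuous fun u => 2 * cos ((m + 1) * u) + 2 * cos θ * cosDivDiff θ (m + 1) u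
      - cosDivDiff θ m u
    fun_prop

theorem cos_sub_cos_mul (m : ℕ) (u : ℝ) :
    (cos u - cos θ) * cosDivDiff θ m u = cos (m * u) - cos (m * θ) := by
  induction m using Nat.twoStepInduction with
  | zero => simp [cosDivDiff]
  | one => simp [cosDivDiff]
  | more m h₀ h₁ =>
    change (cos u - cos θ) * (2 * cos ((m + 1) * u) + 2 * cos θ * cosDivDiff θ (m + 1) u
      - cosDivDiff θ m u) = _
    push_cast at h₀ h₁ ⊢
    linear_combination 2 * cos θ * h₁ - h₀ - cos_add_two_mul_add_cos_mul m u
      + cos_add_two_mul_add_cos_mul m θ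

theorem add_eq_sub {c : ℝ} (hc : sin c = 0) (m : ℕ) (x : ℝ) :
    cosDivDiff θ m (c + x) = cosDivDiff θ m (c - x) := by
  obtain ⟨j, rfl⟩ := sin_eq_zero_iff.mp hc
  induction m using Nat.twoStepInduction with
  | zero => rfl
  | one => rfl
  | more m h₀ h₁ =>
    change 2 * cos ((m + 1) * (j * π + x)) + 2 * cos θ * cosDivDiff θ (m + 1) (j * π + x)
      - cosDivDiff θ m (j * π + x) = 2 * cos ((m + 1) * (j * π - x))
      + 2 * cos θ * cosDivDiff θ (m + 1) (j * π - x) - cosDivDiff θ m (j * π - x)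
    have hsin : sin ((m + 1) * (j * π)) = 0 := by
      rw [← mul_assoc, sin_eq_zero_iff]
      exact ⟨(m + 1) * j, by push_cast; ring⟩
    rw [h₀, h₁, mul_add, mul_sub, cos_add, cos_sub, hsin]
    ring

theorem integral_zero_pi (hθ : sin θ ≠ 0) (m : ℕ) :
    ∫ u in (0)..π, cosDivDiff θ m u = π * sin (m * θ) / sin θ := by
  induction m using Nat.twoStepInduction with
  | zero => simp [cosDivDiff]
  | one => simp [cosDivDiff, hθ]
  | more m h₀ h₁ =>
    have hint := fun j => (continuous θ j).intervalIntegrable (μ := volume) 0 π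
    have hcos : IntervalIntegrable (fun u => 2 * cos ((m + 1) * u)) volume 0 π :=
      (by fun_prop : Continuous fun u : ℝ => 2 * cos ((m + 1) * u)).intervalIntegrable _ _
    change ∫ u in (0)..π, (2 * cos ((m + 1) * u) + 2 * cos θ * cosDivDiff θ (m + 1) u
      - cosDivDiff θ m u) = _
    rw [intervalIntegral.integral_sub (hcos.add ((hint _).const_mul _)) (hint _),
      intervalIntegral.integral_add hcos ((hint _).const_mul _),
      intervalIntegral.integral_const_mul, intervalIntegral.integral_const_mul, h₀, h₁]
    have h₀ := integral_cos_nat_mul_eq_zero m.succ_ne_zero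
    push_cast at h₀ h₁ ⊢
    rw [h₀, eq_sub_of_add_eq (sin_add_two_mul_add_sin_mul m θ)]
    ring

end cosDivDiff

theorem log_sin_sub_of_sin_eq_zero {c : ℝ} (hc : sin c = 0) (z : ℝ) :
    log (sin (c - z)) = log (sin z) := by
  have hcos : |cos c| = 1 := by simp [abs_cos_eq_sqrt_one_sub_sin_sq, hc]
  rw [sin_sub, hc, zero_mul, zero_sub, ← log_abs, abs_neg, abs_mul, hcos, one_mul, log_abs]

theorem symmetricallyContinuousAt_log_sin_half (x : ℝ) :
    SymmetricallyContinuousAt (fun y => log (sin (y / 2))) x := by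
  by_cases hx : sin x = 0
  · refine SymmetricallyContinuousAt.of_forall_eq fun h => ?_
    rw [← log_sin_sub_of_sin_eq_zero hx, show x - (x + h) / 2 = (x - h) / 2 by ring]
  · have hx2 : sin (x / 2) ≠ 0 := fun h =>
      hx (by rw [show x = 2 * (x / 2) by ring, sin_two_mul, h, mul_zero, zero_mul])
    refine SymmetricallyContinuousAt.of_continuousAt ?_
    exact (continuousAt_log hx2).comp (f := fun y => sin (y / 2)) (by fun_prop)

/-- Since `Real.log x = log |x|`, this is an antiderivative of `(cos u - cos θ)⁻¹` on every
interval free of poles, not only where both sines are positive. -/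
noncomputable def antiderivInvCosSub (θ u : ℝ) : ℝ :=
  (log (sin ((u + θ) / 2)) - log (sin ((u - θ) / 2))) / sin θ

namespace antiderivInvCosSub

theorem hasDerivAt {θ u : ℝ} (hθ : sin θ ≠ 0) (hu : cos u ≠ cos θ) :
    HasDerivAt (antiderivInvCosSub θ) (cos u - cos θ)⁻¹ u := by
  set x := (u + θ) / 2
  set y := (u - θ) / 2
  have hprod : cos u - cos θ = -2 * sin x * sin y := cos_sub_cos u θ
  have hne : -2 * sin x * sin y ≠ 0 := hprod ▸ sub_ne_zero.mpr hu
  have hx : sin x ≠ 0 := fun h => hne (by rw [h]; ring)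
  have hy : sin y ≠ 0 := fun h => hne (by rw [h]; ring)
  have hθxy : sin θ = sin x * cos y - cos x * sin y := by
    rw [← sin_sub]; congr 1; ring
  have dx : HasDerivAt (fun v => (v + θ) / 2) (1 / 2) u :=
    ((hasDerivAt_id u).add_const θ).div_const 2
  have dy : HasDerivAt (fun v => (v - θ) / 2) (1 / 2) u :=
    ((hasDerivAt_id u).sub_const θ).div_const 2
  have dlx : HasDerivAt (fun v => log (sin ((v + θ) / 2))) (cos x * (1 / 2) / sin x) u :=
    dx.sin.log hx
  have dly : HasDerivAt (fun v => log (sin ((v - θ) / 2))) (cos y * (1 / 2) / sin y) u :=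
    dy.sin.log hy
  refine ((dlx.sub dly).div_const (sin θ)).congr_deriv ?_
  rw [hprod]
  field_simp
  rw [hθxy]
  ring

theorem add_sub {c : ℝ} (hc : sin c = 0) (θ u : ℝ) :
    antiderivInvCosSub θ (c + u) + antiderivInvCosSub θ (c - u) = 0 := by
  simp only [antiderivInvCosSub]
  rw [show (c - u + θ) / 2 = c - (c + u - θ) / 2 by ring,
    show (c - u - θ) / 2 = c - (c + u + θ) / 2 by ring,
    log_sin_sub_of_sin_eq_zero hc, log_sin_sub_of_sin_eq_zero hc]
  ring

theorem symmetricallyContinuousAt (θ x : ℝ) :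
    SymmetricallyContinuousAt (antiderivInvCosSub θ) x :=
  ((symmetricallyContinuousAt_log_sin_half (x + θ)).comp_add_const.sub
    (symmetricallyContinuousAt_log_sin_half (x - θ)).comp_sub_const).div_const _

end antiderivInvCosSub

theorem integral_add_integral_of_forall_add_eq_sub {W : ℝ → ℝ} (hW : Continuous W) {c : ℝ}
    (hsymm : ∀ x, W (c + x) = W (c - x)) (u : ℝ) :
    (∫ x in (0)..c + u, W x) + ∫ x in (0)..c - u, W x = 2 * ∫ x in (0)..c, W x := by
  have hii : ∀ a b : ℝ, IntervalIntegrable W volume a b := hW.intervalIntegrable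
  have hright := intervalIntegral.integral_comp_add_left W c (a := 0) (b := u)
  have hleft := intervalIntegral.integral_comp_sub_left W c (a := 0) (b := u)
  simp only [add_zero, sub_zero] at hright hleft
  have hreflect : ∫ x in c..c + u, W x = ∫ x in c - u..c, W x := by
    rw [← hright, ← hleft]
    exact intervalIntegral.integral_congr fun x _ => hsymm x
  have h₁ := intervalIntegral.integral_add_adjacent_intervals (hii 0 c) (hii c (c + u))
  have h₂ := intervalIntegral.integral_add_adjacent_intervals (hii 0 (c - u)) (hii (c - u) c)
  linarith

noncomputable def antiderivCosDiv (θ : ℝ) (m : ℕ) (u : ℝ) : ℝ :=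
  (∫ x in (0)..u, cosDivDiff θ m x) + cos (m * θ) * antiderivInvCosSub θ u

namespace antiderivCosDiv

theorem hasDerivAt {θ u : ℝ} (hθ : sin θ ≠ 0) (hu : cos u ≠ cos θ) (m : ℕ) :
    HasDerivAt (antiderivCosDiv θ m) (cos (m * u) / (cos u - cos θ)) u := by
  have hV := ((cosDivDiff.continuous θ m).integral_hasStrictDerivAt 0 u).hasDerivAt
  refine (hV.add ((antiderivInvCosSub.hasDerivAt hθ hu).const_mul _)).congr_deriv ?_
  have hne : cos u - cos θ ≠ 0 := sub_ne_zero.mpr hu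
  field_simp
  linear_combination cosDivDiff.cos_sub_cos_mul θ m u

theorem symmetricallyContinuousAt (θ : ℝ) (m : ℕ) (x : ℝ) :
    SymmetricallyContinuousAt (antiderivCosDiv θ m) x :=
  .add (.of_continuousAt
      ((cosDivDiff.continuous θ m).integral_hasStrictDerivAt 0 x).hasDerivAt.continuousAt)
    ((antiderivInvCosSub.symmetricallyContinuousAt θ x).const_mul _)

theorem add_sub {c : ℝ} (hc : sin c = 0) (θ : ℝ) (m : ℕ) (u : ℝ) :
    antiderivCosDiv θ m (c + u) + antiderivCosDiv θ m (c - u) = 2 * antiderivCosDiv θ m c := by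
  have hV := integral_add_integral_of_forall_add_eq_sub (cosDivDiff.continuous θ m)
    (cosDivDiff.add_eq_sub θ hc m) u
  have hA := antiderivInvCosSub.add_sub hc θ u
  have hA₀ := antiderivInvCosSub.add_sub hc θ 0
  simp only [add_zero, sub_zero] at hA₀
  simp only [antiderivCosDiv]
  linear_combination hV + cos (m * θ) * hA - cos (m * θ) * hA₀

theorem pi_sub_zero {θ : ℝ} (hθ : sin θ ≠ 0) (m : ℕ) :
    antiderivCosDiv θ m π - antiderivCosDiv θ m 0 = π * sin (m * θ) / sin θ := by
  have hπ := antiderivInvCosSub.add_sub sin_pi θ 0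
  have h₀ := antiderivInvCosSub.add_sub sin_zero θ 0
  simp only [add_zero, sub_zero] at hπ h₀
  simp only [antiderivCosDiv, intervalIntegral.integral_same, cosDivDiff.integral_zero_pi θ hθ]
  linear_combination cos (m * θ) * (hπ - h₀) / 2

end antiderivCosDiv

noncomputable def antiderivHker (n : ℕ) (t θ : ℝ) : ℝ :=
  (sin (n * θ) * sin θ) / (2 * n) *
    (antiderivCosDiv θ n (t - π / (2 * n)) + antiderivCosDiv θ n (t + π / (2 * n)))

section Hker

variable {n : ℕ} {t θ : ℝ}

theorem continuousAt_Hker (h₁ : cos (t - π / (2 * n)) ≠ cos θ)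
    (h₂ : cos (t + π / (2 * n)) ≠ cos θ) : ContinuousAt (fun t => Hker n t θ) t := by
  have h₁' := sub_ne_zero.mpr h₁
  have h₂' := sub_ne_zero.mpr h₂
  unfold Hker
  fun_prop (disch := assumption)

theorem hasDerivAt_antiderivHker (hθ : sin θ ≠ 0) (h₁ : cos (t - π / (2 * n)) ≠ cos θ)
    (h₂ : cos (t + π / (2 * n)) ≠ cos θ) :
    HasDerivAt (fun t => antiderivHker n t θ) (Hker n t θ) t :=
  (((antiderivCosDiv.hasDerivAt hθ h₁ n).comp_sub_const t _).add
    ((antiderivCosDiv.hasDerivAt hθ h₂ n).comp_add_const t _)).const_mul _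

theorem symmetricallyContinuousAt_antiderivHker (n : ℕ) (θ x : ℝ) :
    SymmetricallyContinuousAt (fun t => antiderivHker n t θ) x :=
  ((antiderivCosDiv.symmetricallyContinuousAt θ n _).comp_sub_const.add
    (antiderivCosDiv.symmetricallyContinuousAt θ n _).comp_add_const).const_mul _

theorem continuousAt_antiderivHker_of_sin_eq_zero {c : ℝ} (hc : sin c = 0) (n : ℕ) (θ : ℝ) :
    ContinuousAt (fun t => antiderivHker n t θ) c := by
  refine (symmetricallyContinuousAt_antiderivHker n θ c).continuousAt fun u => ?_
  set a := π / (2 * n)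
  have h₁ := antiderivCosDiv.add_sub hc θ n (u - a)
  have h₂ := antiderivCosDiv.add_sub hc θ n (u + a)
  have h₃ := antiderivCosDiv.add_sub hc θ n a
  rw [show c + (u - a) = c + u - a by ring, show c - (u - a) = c - u + a by ring] at h₁
  rw [show c + (u + a) = c + u + a by ring, show c - (u + a) = c - u - a by ring] at h₂
  simp only [antiderivHker]
  linear_combination (sin (n * θ) * sin θ / (2 * n)) * (h₁ + h₂ - 2 * h₃)

theorem antiderivHker_pi_sub_zero (hθ : sin θ ≠ 0) (n : ℕ) :
    antiderivHker n π θ - antiderivHker n 0 θ = π / n * sin (n * θ) ^ 2 := by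
  have hπ := antiderivCosDiv.add_sub sin_pi θ n (π / (2 * n))
  have h₀ := antiderivCosDiv.add_sub sin_zero θ n (π / (2 * n))
  have hval := antiderivCosDiv.pi_sub_zero hθ n
  simp only [antiderivHker]
  rw [add_comm (antiderivCosDiv θ n (π - _)), hπ, add_comm (antiderivCosDiv θ n (0 - _)), h₀,
    ← mul_sub, ← mul_sub, hval]
  rcases eq_or_ne n 0 with rfl | hn
  · simp
  · field_simp

end Hker

/-- For `n ≥ 1` and `θ ∈ (0,π)`, `∫₀^π H_n(t,θ) dt = (π/n) sin²(nθ)`, the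
integral being a principal value: the limit, as `ε → 0⁺`, of the integral over
the points of `[0,π]` at distance at least `ε` from every singularity of the
integrand (the points `s` with `cos(s ∓ π/(2n)) = cos θ`). -/
theorem integral_Hker (n : ℕ) (hn : 1 ≤ n) (θ : ℝ) (hθ : θ ∈ Set.Ioo 0 π) :
    Tendsto (fun ε : ℝ =>
        ∫ t in {t ∈ Set.Icc (0:ℝ) π | ∀ s : ℝ,
          (Real.cos (s - π / (2 * n)) = Real.cos θ ∨
           Real.cos (s + π / (2 * n)) = Real.cos θ) → ε ≤ |t - s|},
          Hker n t θ)
      (nhdsWithin 0 (Set.Ioi 0))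
      (nhds (π / n * (Real.sin (n * θ)) ^ 2)) := by
  have hsin : 0 < sin θ := sin_pos_of_pos_of_lt_pi hθ.1 hθ.2
  have ha : 0 < sin (π / (2 * n)) := by
    have hn' : (1 : ℝ) ≤ n := by exact_mod_cast hn
    refine sin_pos_of_pos_of_lt_pi (by positivity) ?_
    rw [div_lt_iff₀ (by positivity)]
    nlinarith [pi_pos]
  simp_rw [cos_sub_eq_or_cos_add_eq_iff, setOf_forall_cos_eq_le_abs_sub,
    ← antiderivHker_pi_sub_zero hsin.ne' n]
  refine tendsto_setIntegral_of_symmetricallyContinuousAt (arccos_nonneg _)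
    (arccos_cos_sub_lt_arccos_cos_add hsin ha) (arccos_le_pi _) (fun t ht htp htq => ?_)
    (continuousAt_antiderivHker_of_sin_eq_zero sin_zero n θ)
    (continuousAt_antiderivHker_of_sin_eq_zero sin_pi n θ)
    (symmetricallyContinuousAt_antiderivHker n θ _) (symmetricallyContinuousAt_antiderivHker n θ _)
  obtain ⟨h₁, h₂⟩ := cos_sub_ne_and_cos_add_ne ht htp htq
  exact ⟨hasDerivAt_antiderivHker hsin.ne' h₁ h₂, continuousAt_Hker h₁ h₂⟩
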